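/- Let G be a finitely generated group whose word problem WP(G) is recursively enumerable. Then the one-or-less subshift X_{≤1} ⊆ {0,1}^G is effectively closed if and only if WP(G) is decidable. -/

import Mathlib

open scoped Classical

noncomputable section

namespace SDG

/-! ### Relativized computability -/

/-- Partial recursive functions `ℕ →. ℕ` relative to an oracle `O`. -/
inductive NatPartrecIn (O : ℕ →. ℕ) : (ℕ →. ℕ) → Prop
  | oracle : NatPartrecIn O O
  | zero : NatPartrecIn O (pure 0)
  | succ : NatPartrecIn O Nat.succ
  | left : NatPartrecIn O ↑fun n : ℕ => n.unpair.1
  | right : NatPartrecIn O ↑fun n : ℕ => n.unpair.2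
  | pair {f g} : NatPartrecIn O f → NatPartrecIn O g →
      NatPartrecIn O fun n => Nat.pair <$> f n <*> g n
  | comp {f g} : NatPartrecIn O f → NatPartrecIn O g →
      NatPartrecIn O fun n => g n >>= f
  | prec {f g} : NatPartrecIn O f → NatPartrecIn O g →
      NatPartrecIn O (Nat.unpaired fun a n =>
        n.rec (f a) fun y IH => do let i ← IH; g (Nat.pair a (Nat.pair y i)))
  | rfind {f} : NatPartrecIn O f →
      NatPartrecIn O fun a => Nat.rfind fun n => (fun m => m = 0) <$> f (Nat.pair a n)

/-- A partial function between `Primcodable` types is partial recursive in the oracle `O`. -/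
def PartrecIn (O : ℕ →. ℕ) {α σ : Type} [Primcodable α] [Primcodable σ] (f : α →. σ) : Prop :=
  NatPartrecIn O fun n =>
    Part.bind (Part.ofOption (Encodable.decode (α := α) n)) fun a => (f a).map Encodable.encode

/-- A predicate is recursively enumerable in the oracle `O` if it is the domain of a partial
function recursive in `O`. -/
def RePredIn (O : ℕ →. ℕ) {α : Type} [Primcodable α] (p : α → Prop) : Prop :=
  PartrecIn O fun a => Part.assert (p a) fun _ => Part.some ()

/-- The characteristic function (as an oracle `ℕ →. ℕ`) of a set `L` of elements of a
`Primcodable` type: on the code of an element of `L` it answers `1`, elsewhere `0`. -/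
def charFun {α : Type} [Primcodable α] (L : Set α) : ℕ →. ℕ :=
  fun n => Part.some (if ∃ a ∈ L, Encodable.encode a = n then 1 else 0)

/-! ### Finitely generated groups, words and pattern codings -/

variable {G : Type} [Group G]

/-- The group element represented by a word over the generators `S`. -/
def wordEval {k : ℕ} (S : Fin k → G) (w : List (Fin k)) : G :=
  (w.map S).prod

/-- `S : Fin k → G` is a finite symmetric generating family containing the identity. -/
def IsGenData {k : ℕ} (S : Fin k → G) : Prop :=
  (∃ i, S i = 1) ∧ (∀ i, ∃ j, S j = (S i)⁻¹) ∧ Subgroup.closure (Set.range S) = ⊤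

/-- The word problem of `G` with respect to the generating family `S`. -/
def WP {k : ℕ} (S : Fin k → G) : Set (List (Fin k)) :=
  {w | wordEval S w = 1}

/-- A pattern coding over the alphabet `A`: a finite list of pairs (word, symbol). -/
abbrev PatternCoding (k : ℕ) (A : Type) : Type :=
  List (List (Fin k) × A)

/-- The subshift defined by a set `C` of pattern codings: configurations in which no translate
of a coded pattern occurs. -/
def XC {k : ℕ} (S : Fin k → G) {A : Type} (C : Set (PatternCoding k A)) : Set (G → A) :=
  {x | ¬ ∃ (g : G) (c : PatternCoding k A), c ∈ C ∧ ∀ p ∈ c, x (g * wordEval S p.1) = p.2}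

/-- A set is effectively closed if it is defined by a recursively enumerable set of
pattern codings. -/
def EffectivelyClosed {k : ℕ} (S : Fin k → G) {A : Type} [Primcodable A]
    (X : Set (G → A)) : Prop :=
  ∃ C : Set (PatternCoding k A), REPred (· ∈ C) ∧ X = XC S C

/-- A set is `G`-effectively closed if it is defined by a set of pattern codings which is
recursively enumerable with oracle the word problem of `G`. -/
def GEffectivelyClosed {k : ℕ} (S : Fin k → G) {A : Type} [Primcodable A]
    (X : Set (G → A)) : Prop :=
  ∃ C : Set (PatternCoding k A), RePredIn (charFun (WP S)) (· ∈ C) ∧ X = XC S C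

/-- A pattern coding is consistent if words representing the same group element receive the
same symbol. -/
def Consistent {k : ℕ} (S : Fin k → G) {A : Type} (c : PatternCoding k A) : Prop :=
  ∀ p ∈ c, ∀ q ∈ c, wordEval S p.1 = wordEval S q.1 → p.2 = q.2

/-! ### Subshifts, SFTs, sofic subshifts -/

/-- `X ⊆ A^G` is a subshift: closed (for the product of the discrete topology) and
shift-invariant. -/
def IsSubshift {A : Type} (X : Set (G → A)) : Prop :=
  (letI : TopologicalSpace A := ⊥; IsClosed X) ∧
    ∀ x ∈ X, ∀ g : G, (fun h => x (g⁻¹ * h)) ∈ X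

/-- A pattern with finite support over the alphabet `A`. -/
structure Pattern (G : Type) (A : Type) where
  supp : Finset G
  val : (g : G) → g ∈ supp → A

/-- The pattern `p` occurs in the configuration `x` at position `g`. -/
def PatternOccurs {A : Type} (p : Pattern G A) (x : G → A) (g : G) : Prop :=
  ∀ (h : G) (hh : h ∈ p.supp), x (g * h) = p.val h hh

/-- The subshift defined by a set of forbidden patterns. -/
def XPat {A : Type} (Fs : Set (Pattern G A)) : Set (G → A) :=
  {x | ¬ ∃ (g : G) (p : Pattern G A), p ∈ Fs ∧ PatternOccurs p x g}

/-- A subshift of finite type: defined by a finite set of forbidden patterns. -/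
def IsSFT {A : Type} (X : Set (G → A)) : Prop :=
  ∃ Fs : Set (Pattern G A), Fs.Finite ∧ X = XPat Fs

/-- A witness that `X` is sofic: an SFT `Y` over a finite alphabet `B` together with a factor
code (continuous shift-equivariant surjection) from `Y` onto `X`. -/
structure SoficVia (G : Type) [Group G] {A : Type} (X : Set (G → A)) : Type 1 where
  B : Type
  finB : Fintype B
  Y : Set (G → B)
  sft : IsSFT Y
  subY : IsSubshift Y
  phi : (G → B) → (G → A)
  cont : letI : TopologicalSpace B := ⊥
         letI : TopologicalSpace A := ⊥
         ContinuousOn phi Y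
  equiv : ∀ y ∈ Y, ∀ g : G, phi (fun h => y (g⁻¹ * h)) = fun h => phi y (g⁻¹ * h)
  image : phi '' Y = X

/-- A subshift is sofic if it is the image of an SFT under a factor code. -/
def IsSofic {A : Type} (X : Set (G → A)) : Prop :=
  Nonempty (SoficVia G X)

/-- A factor code from `X` onto `Y`: continuous (discrete product topologies),
shift-equivariant and surjective. -/
def FactorCode {A B : Type} (X : Set (G → A)) (Y : Set (G → B))
    (φ : (G → A) → (G → B)) : Prop :=
  (letI : TopologicalSpace A := ⊥
   letI : TopologicalSpace B := ⊥
   ContinuousOn φ X) ∧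
  (∀ x ∈ X, ∀ g : G, φ (fun h => x (g⁻¹ * h)) = fun h => φ x (g⁻¹ * h)) ∧
  φ '' X = Y

/-- Two subshifts are conjugate if there is a shift-equivariant homeomorphism between them. -/
def Conjugate {A B : Type} (X : Set (G → A)) (Y : Set (G → B)) : Prop :=
  ∃ (φ : (G → A) → (G → B)) (ψ : (G → B) → (G → A)),
    FactorCode X Y φ ∧ FactorCode Y X ψ ∧
    (∀ x ∈ X, ψ (φ x) = x) ∧ (∀ y ∈ Y, φ (ψ y) = y)

/-- The one-or-less subshift: configurations with at most one occurrence of the symbol `1`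
(represented by `true`). -/
def Xle1 (G : Type) : Set (G → Bool) :=
  {x | ∀ g h : G, x g = true → x h = true → g = h}

/-! ### `G`-machines -/

/-- A `G`-machine: finite set of states, finite tape alphabet `A` with a blank symbol, initial
state, accepting states, and a transition function moving with the generators `Fin k`. -/
structure GMachine (k : ℕ) (A : Type) : Type 1 where
  Q : Type
  finQ : Fintype Q
  blank : A
  q0 : Q
  QF : Set Q
  delta : A × Q → A × Q × Fin k

/-- One step of a `G`-machine in the fixed head model: if `δ(x(1),q) = (a,q',s)` then the new
configuration is `σ_{s⁻¹} x̃` where `x̃` is `x` with the value at `1` replaced by `a`. -/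
def GMachine.step {k : ℕ} {A : Type} (M : GMachine k A) (S : Fin k → G) :
    (G → A) × M.Q → (G → A) × M.Q :=
  fun xq =>
    let t := M.delta (xq.1 1, xq.2)
    let xt : G → A := Function.update xq.1 1 t.1
    (fun h => xt (S t.2.2 * h), t.2.1)

/-- The configuration which equals the pattern `p` on its support and `blank` elsewhere. -/
def Pattern.config {A : Type} (p : Pattern G A) (blank : A) : G → A :=
  fun g => if h : g ∈ p.supp then p.val g h else blank

/-- The `G`-machine `M` accepts the pattern `p` if starting from the configuration `x^p` in the
initial state it eventually reaches an accepting state. -/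
def GMachine.Accepts {k : ℕ} {A : Type} (M : GMachine k A) (S : Fin k → G)
    (p : Pattern G A) : Prop :=
  ∃ n : ℕ, ((M.step S)^[n] (p.config M.blank, M.q0)).2 ∈ M.QF

/-- A set of patterns is `G`-recursively enumerable if some `G`-machine accepts exactly its
elements. -/
def GRecEnum {k : ℕ} (S : Fin k → G) {A : Type} (L : Set (Pattern G A)) : Prop :=
  ∃ M : GMachine k A, ∀ p : Pattern G A, M.Accepts S p ↔ p ∈ L

/-- The consistent pattern coding `c` defines the pattern `p`. -/
def Defines {k : ℕ} (S : Fin k → G) {A : Type} (c : PatternCoding k A)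
    (p : Pattern G A) : Prop :=
  (∀ g : G, g ∈ p.supp ↔ ∃ q ∈ c, wordEval S q.1 = g) ∧
  ∀ q ∈ c, ∀ hg : wordEval S q.1 ∈ p.supp, p.val (wordEval S q.1) hg = q.2

/-- `p(C)`: the set of patterns defined by the consistent pattern codings of `C`. -/
def patternsOf {k : ℕ} (S : Fin k → G) {A : Type} (C : Set (PatternCoding k A)) :
    Set (Pattern G A) :=
  {p | ∃ c ∈ C, Consistent S c ∧ Defines S c p}

/-- A set of patterns is closed by extensions if any pattern extending a pattern of the set
also belongs to the set. -/
def ClosedByExtensions {A : Type} (L : Set (Pattern G A)) : Prop :=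
  ∀ (p₁ p₂ : Pattern G A) (hsub : p₁.supp ⊆ p₂.supp),
    (∀ (g : G) (hg : g ∈ p₁.supp), p₂.val g (hsub hg) = p₁.val g hg) →
    p₁ ∈ L → p₂ ∈ L

/-! ### Balls, ends, amenability -/

/-- The ball of radius `n` in the word metric given by `S`. -/
def ballS {k : ℕ} (S : Fin k → G) (n : ℕ) : Set G :=
  {x | ∃ w : List (Fin k), w.length ≤ n ∧ wordEval S w = x}

/-- Adjacency in the Cayley graph restricted to the set `V`. -/
def Adj {k : ℕ} (S : Fin k → G) (V : Set G) (a b : G) : Prop :=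
  a ∈ V ∧ b ∈ V ∧ ∃ i, a * S i = b

/-- Reachability inside `V` in the Cayley graph of `(G,S)`. -/
def Reach {k : ℕ} (S : Fin k → G) (V : Set G) (a b : G) : Prop :=
  Relation.ReflTransGen (Adj S V) a b

/-- `G` has at least two ends: for some `n`, the complement of the ball of radius `n` in the
Cayley graph has at least two infinite connected components. -/
def HasTwoOrMoreEnds {k : ℕ} (S : Fin k → G) : Prop :=
  ∃ (n : ℕ) (x y : G), x ∉ ballS S n ∧ y ∉ ballS S n ∧
    {z | Reach S (ballS S n)ᶜ x z}.Infinite ∧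
    {z | Reach S (ballS S n)ᶜ y z}.Infinite ∧
    ¬ Reach S (ballS S n)ᶜ x y

/-- The Følner condition: `G` is amenable. -/
def FolnerAmenable (G : Type) [Group G] : Prop :=
  ∀ (K : Finset G) (ε : ℝ), 0 < ε →
    ∃ F : Finset G, F.Nonempty ∧ ∀ k ∈ K,
      ((F \ F.image (fun x => x * k)).card : ℝ) < ε * F.card

/-! ### `G × ℤ`, presentations, hardness and the domino problems -/

/-- Generators of `G × ℤ`: the generators of `G` paired with `0`, together with `(1,±1)`. -/
def prodGens {k : ℕ} (S : Fin k → G) : Fin (k + 2) → G × Multiplicative ℤ :=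
  fun i =>
    if h : (i : ℕ) < k then (S ⟨i, h⟩, 1)
    else if (i : ℕ) = k then (1, Multiplicative.ofAdd 1)
    else (1, Multiplicative.ofAdd (-1))

/-- The element of the free group over the generator indices represented by a word. -/
def freeWord {k : ℕ} (w : List (Fin k)) : FreeGroup (Fin k) :=
  (w.map FreeGroup.of).prod

/-- `G` is recursively presented with respect to `S`: there is a recursively enumerable set of
relators (words over the generators) whose normal closure in the free group over the
generator indices is the kernel of the evaluation map. -/
def RecursivelyPresented {k : ℕ} (S : Fin k → G) : Prop :=
  ∃ R : Set (List (Fin k)), REPred (· ∈ R) ∧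
    MonoidHom.ker (FreeGroup.lift S) = Subgroup.normalClosure (freeWord '' R)

/-- `L` is hard for the class of predicates recursively enumerable in the oracle `O`
(equivalently, hard for the halting problem of machines with oracle `O`): every
such predicate many-one reduces to `L` via a computable function. -/
def OracleREHard {α : Type} [Primcodable α] (O : ℕ →. ℕ) (L : Set α) : Prop :=
  ∀ p : ℕ → Prop, RePredIn O p → ∃ f : ℕ → α, Computable f ∧ ∀ n, p n ↔ f n ∈ L

/-- The domino problem of `(K,T)`: pairs `(N, F)` of an alphabet size and a finite list of
pattern codings over `ℕ` such that no configuration with symbols `< N` avoids `F`. -/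
def DP {K : Type} [Group K] {m : ℕ} (T : Fin m → K) : Set (ℕ × List (PatternCoding m ℕ)) :=
  {q | ¬ ∃ x : K → ℕ, (∀ g, x g < q.1) ∧ x ∈ XC T {c | c ∈ q.2}}

/-- The origin constrained domino problem of `(K,T)`: triples `((N,a),F)` such that no
configuration with symbols `< N` and the symbol `a` at the origin avoids `F`. -/
def OCDP {K : Type} [Group K] {m : ℕ} (T : Fin m → K) :
    Set ((ℕ × ℕ) × List (PatternCoding m ℕ)) :=
  {q | ¬ ∃ x : K → ℕ, (∀ g, x g < q.1.1) ∧ x 1 = q.1.2 ∧ x ∈ XC T {c | c ∈ q.2}}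

end SDG

/-! If the word problem is decidable, `X_{≤1}` is defined by the decidable set of codings
`{(ε, 1), (v, 1)}` with `v ≠ 1`. Conversely, let `X_{≤1} = X_C` with `C` r.e. A word `w` is
nontrivial iff the closed set of configurations carrying `1` at both `1` and `w̄` avoids `X_C`,
i.e. is covered by translates of cylinders of `C`; by compactness finitely many suffice. Such a
finite cover is witnessed by finitely many words, equalities between them, codings in `C`, and a
finite check over all `0/1`-assignments of the cells involved. Since the word problem is r.e.,
these witnesses can be enumerated, so the complement of the word problem is r.e. too, and
Post's theorem concludes. -/

theorem Primrec.list_sublists {α : Type} [Primcodable α] : Primrec (@List.sublists α) :=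
  (Primrec.list_foldr Primrec.id (Primrec.const [[]])
    (Primrec.list_flatMap (Primrec.snd.comp Primrec.snd)
      (Primrec.list_cons.comp Primrec.snd
        (Primrec.list_cons.comp
          (Primrec.list_cons.comp (Primrec.fst.comp (Primrec.snd.comp Primrec.fst)) Primrec.snd)
          (Primrec.const []))).to₂).to₂).of_eq fun _ => rfl

namespace REPred

variable {α β : Type} [Primcodable α] [Primcodable β]

theorem comp {p : β → Prop} (hp : REPred p) {f : α → β} (hf : Computable f) :
    REPred fun a => p (f a) :=
  Partrec.comp hp hf

open Nat.Partrec.Code in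
theorem exists_primrecRel_monotone {p : α → Prop} (hp : REPred p) :
    ∃ R : α → ℕ → Prop, PrimrecRel R ∧ (∀ a, Monotone (R a)) ∧ ∀ a, p a ↔ ∃ s, R a s := by
  obtain ⟨c, hc⟩ := exists_code.1 hp
  refine ⟨fun a s => (evaln s c (Encodable.encode a)).isSome, ?_, ?_, fun a => ?_⟩
  · exact Primrec.eq.comp (Primrec.option_isSome.comp (primrec_evaln.comp
      ((Primrec.snd.pair (Primrec.const c)).pair (Primrec.encode.comp Primrec.fst))))
      (Primrec.const true)
  · intro a s s' hss hs
    obtain ⟨x, hx⟩ := Option.isSome_iff_exists.1 hs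
    exact Option.isSome_iff_exists.2 ⟨x, evaln_mono hss hx⟩
  · have hdom : (eval c (Encodable.encode a)).Dom ↔ p a := by
      simp only [hc, Encodable.encodek, Part.coe_some, Part.bind_some, Part.map_Dom]
      exact ⟨fun h => h.1, fun h => ⟨h, trivial⟩⟩
    rw [← hdom, Part.dom_iff_mem]
    simp only [evaln_complete, Option.isSome_iff_exists]
    exact ⟨fun ⟨x, s, hs⟩ => ⟨s, x, hs⟩, fun ⟨s, x, hs⟩ => ⟨x, s, hs⟩⟩

theorem of_exists_primrecRel {R : α → β → Prop} (hR : PrimrecRel R) :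
    REPred fun a => ∃ b, R a b := by
  have hf : Primrec₂ fun (a : α) (n : ℕ) =>
      (Encodable.decode (α := β) n).bind fun b => if R a b then some b else none :=
    Primrec.option_bind (Primrec.decode.comp Primrec.snd)
      (Primrec.ite (hR.comp (Primrec.fst.comp Primrec.fst) Primrec.snd)
        (Primrec.option_some.comp Primrec.snd) (Primrec.const none)).to₂
  refine (Partrec.rfindOpt hf.to_comp).dom_re.of_eq fun a => ?_
  rw [Nat.rfindOpt_dom]
  constructor
  · rintro ⟨n, b, hb⟩
    simp only [Option.mem_def, Option.bind_eq_some_iff, Option.ite_none_right_eq_some,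
      Option.some.injEq] at hb
    obtain ⟨b', -, hR', rfl⟩ := hb
    exact ⟨b', hR'⟩
  · rintro ⟨b, hb⟩
    exact ⟨Encodable.encode b, b, by simp [Encodable.encodek, hb]⟩

protected theorem and {p q : α → Prop} (hp : REPred p) (hq : REPred q) :
    REPred fun a => p a ∧ q a := by
  obtain ⟨P, hP, hPm, hpP⟩ := exists_primrecRel_monotone hp
  obtain ⟨Q, hQ, hQm, hqQ⟩ := exists_primrecRel_monotone hq
  refine (of_exists_primrecRel (R := fun a s => P a s ∧ Q a s) (hP.and hQ)).of_eq fun a => ?_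
  rw [hpP, hqQ]
  constructor
  · rintro ⟨s, hs, ht⟩
    exact ⟨⟨s, hs⟩, ⟨s, ht⟩⟩
  · rintro ⟨⟨s, hs⟩, ⟨t, ht⟩⟩
    exact ⟨max s t, hPm a (le_max_left s t) hs, hQm a (le_max_right s t) ht⟩

theorem exists_of_prod {p : α → β → Prop} (hp : REPred fun x : α × β => p x.1 x.2) :
    REPred fun a => ∃ b, p a b := by
  obtain ⟨R, hR, -, hpR⟩ := exists_primrecRel_monotone hp
  refine (of_exists_primrecRel (R := fun a (bs : β × ℕ) => R (a, bs.1) bs.2)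
    (hR.comp (Primrec.fst.pair (Primrec.fst.comp Primrec.snd)) (Primrec.snd.comp Primrec.snd))
    ).of_eq fun a => ?_
  exact ⟨fun ⟨⟨b, s⟩, h⟩ => ⟨b, (hpR (a, b)).2 ⟨s, h⟩⟩,
    fun ⟨b, h⟩ => let ⟨s, hs⟩ := (hpR (a, b)).1 h; ⟨(b, s), hs⟩⟩

theorem forall_mem_list {p : α → β → Prop} (hp : REPred fun x : α × β => p x.1 x.2)
    {f : α → List β} (hf : Primrec f) : REPred fun a => ∀ b ∈ f a, p a b := by
  obtain ⟨R, hR, hRm, hpR⟩ := exists_primrecRel_monotone hp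
  have hR' : PrimrecRel fun (a : α) (s : ℕ) => ∀ b ∈ f a, R (a, b) s :=
    (PrimrecRel.forall_mem_list (R := fun b (x : α × ℕ) => R (x.1, b) x.2)
      (hR.comp ((Primrec.fst.comp Primrec.snd).pair Primrec.fst) (Primrec.snd.comp Primrec.snd))
      ).comp (hf.comp Primrec.fst) Primrec.id
  refine (of_exists_primrecRel hR').of_eq fun a =>
    ⟨fun ⟨s, hs⟩ b hb => (hpR (a, b)).2 ⟨s, hs b hb⟩, fun h => ?_⟩
  refine Filter.Eventually.exists (f := Filter.atTop)
    ((Filter.eventually_all_finite (f a).finite_toSet).2 fun b hb => ?_)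
  obtain ⟨s, hs⟩ := (hpR (a, b)).1 (h b hb)
  exact Filter.eventually_atTop.2 ⟨s, fun t hst => hRm _ hst hs⟩

theorem imp {d r : α → Prop} (hd : PrimrecPred d) (hr : REPred r) :
    REPred fun a => d a → r a := by
  obtain ⟨R, hR, -, hrR⟩ := exists_primrecRel_monotone hr
  refine (of_exists_primrecRel (R := fun a s => ¬ d a ∨ R a s)
    ((hd.comp Primrec.fst).not.or hR)).of_eq fun a => ?_
  rw [hrR]
  by_cases h : d a <;> simp [h]

end REPred

namespace SDG

variable {G : Type} [Group G] {k : ℕ} {S : Fin k → G}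

theorem wordEval_append (u v : List (Fin k)) :
    wordEval S (u ++ v) = wordEval S u * wordEval S v := by
  simp [wordEval]

def wordInv (τ : Fin k → Fin k) (w : List (Fin k)) : List (Fin k) :=
  (w.map τ).reverse

theorem primrec_wordInv (τ : Fin k → Fin k) : Primrec (wordInv τ) :=
  Primrec.list_reverse.comp
    (Primrec.list_map Primrec.id ((Primrec.dom_finite τ).comp Primrec.snd).to₂)

theorem wordEval_wordInv {τ : Fin k → Fin k} (hτ : ∀ i, S (τ i) = (S i)⁻¹) (w : List (Fin k)) :
    wordEval S (wordInv τ w) = (wordEval S w)⁻¹ := by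
  simp [wordEval, wordInv, List.map_reverse, Function.comp_def, hτ, List.prod_inv_reverse]

theorem wordEval_surjective {τ : Fin k → Fin k} (hτ : ∀ i, S (τ i) = (S i)⁻¹)
    (hgen : Subgroup.closure (Set.range S) = ⊤) : Function.Surjective (wordEval S) := by
  intro g
  have hg : g ∈ Subgroup.closure (Set.range S) := hgen ▸ Subgroup.mem_top g
  induction hg using Subgroup.closure_induction with
  | mem _ h =>
    obtain ⟨i, rfl⟩ := h
    exact ⟨[i], by simp [wordEval]⟩
  | one => exact ⟨[], rfl⟩
  | mul _ _ _ _ hx hy =>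
    obtain ⟨u, rfl⟩ := hx
    obtain ⟨v, rfl⟩ := hy
    exact ⟨u ++ v, wordEval_append u v⟩
  | inv _ _ hx =>
    obtain ⟨u, rfl⟩ := hx
    exact ⟨wordInv τ u, wordEval_wordInv hτ u⟩

theorem rePred_wordEval_eq {τ : Fin k → Fin k} (hτ : ∀ i, S (τ i) = (S i)⁻¹)
    (hWP : REPred (· ∈ WP S)) :
    REPred fun uv : List (Fin k) × List (Fin k) => wordEval S uv.1 = wordEval S uv.2 :=
  (REPred.comp hWP (Primrec.list_append.comp ((primrec_wordInv τ).comp Primrec.fst)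
    Primrec.snd).to_comp).of_eq fun uv => by
    simp [WP, wordEval_append, wordEval_wordInv hτ, inv_mul_eq_one]

theorem xle1_eq_XC (hsurj : Function.Surjective (wordEval S)) :
    Xle1 G = XC S {c | ∃ v, v ∉ WP S ∧ c = [([], true), (v, true)]} := by
  ext x
  constructor
  · rintro hx ⟨g, _, ⟨v, hv, rfl⟩, hocc⟩
    have hg : x (g * wordEval S []) = true := hocc ([], true) (by simp)
    have hgv : x (g * wordEval S v) = true := hocc (v, true) (by simp)
    exact hv (by simpa [WP, wordEval] using hx _ _ hg hgv)
  · intro hx g h hg hh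
    by_contra hne
    obtain ⟨v, hv⟩ := hsurj (g⁻¹ * h)
    refine hx ⟨g, _, ⟨v, ?_, rfl⟩, ?_⟩
    · simpa [WP, hv, inv_mul_eq_one] using hne
    · simp only [List.mem_cons, List.not_mem_nil, or_false]
      rintro p (rfl | rfl)
      · simpa [wordEval] using hg
      · simpa [hv] using hh

theorem effectivelyClosed_xle1 (hsurj : Function.Surjective (wordEval S))
    (hWP : ComputablePred (· ∈ WP S)) : EffectivelyClosed S (Xle1 G) := by
  refine ⟨_, REPred.exists_of_prod (REPred.and ?_ ?_), xle1_eq_XC hsurj⟩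
  · exact REPred.comp hWP.not.to_re Computable.snd
  · exact (Primrec.eq.comp Primrec.fst (Primrec.list_cons.comp
      (Primrec.const ([], true)) (Primrec.list_cons.comp (Primrec.snd.pair (Primrec.const true))
        (Primrec.const [])))).computablePred.to_re

theorem exists_list_cover_of_isClosed {A : Type} [TopologicalSpace A] [DiscreteTopology A]
    [CompactSpace A] {C : Set (PatternCoding k A)} {K : Set (G → A)}
    (hK : IsClosed K) (hKX : Disjoint K (XC S C)) :
    ∃ l : List (G × PatternCoding k A), (∀ o ∈ l, o.2 ∈ C) ∧
      ∀ x ∈ K, ∃ o ∈ l, ∀ p ∈ o.2, x (o.1 * wordEval S p.1) = p.2 := by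
  let U : G × PatternCoding k A → Set (G → A) := fun o =>
    {x | ∀ p ∈ o.2, x (o.1 * wordEval S p.1) = p.2}
  have hU : ∀ o, IsOpen (U o) := fun o => by
    simp only [U, Set.ofPred_forall]
    exact (List.finite_toSet o.2).isOpen_biInter fun p _ =>
      (isOpen_discrete {p.2}).preimage (continuous_apply (A := fun _ : G => A) _)
  have hcover : K ⊆ ⋃ o ∈ {o : G × PatternCoding k A | o.2 ∈ C}, U o := fun x hx => by
    have hxX : x ∉ XC S C := Set.disjoint_left.1 hKX hx
    obtain ⟨g, c, hc, hocc⟩ := not_not.1 hxX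
    exact Set.mem_biUnion (x := (g, c)) hc hocc
  obtain ⟨b, hbC, hbfin, hbcover⟩ :=
    hK.isCompact.elim_finite_subcover_image (fun o _ => hU o) hcover
  refine ⟨hbfin.toFinset.toList, fun o ho => hbC (by simpa using ho), fun x hx => ?_⟩
  obtain ⟨o, ho, hxo⟩ := Set.mem_iUnion₂.1 (hbcover hx)
  exact ⟨o, by simpa using ho, hxo⟩

abbrev LabelledOccurrence (k : ℕ) : Type :=
  List (Fin k) × List (List (Fin k) × Bool × ℕ)

def labelledWords (w : List (Fin k)) (l₀ l₁ : ℕ) (O : List (LabelledOccurrence k)) :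
    List (List (Fin k) × ℕ) :=
  ([], l₀) :: (w, l₁) :: O.flatMap fun o => o.2.map fun q => (o.1 ++ q.1, q.2.2)

def LabelCover (l₀ l₁ : ℕ) (P : List (List (Bool × ℕ))) : Prop :=
  ∀ T ∈ (l₀ :: l₁ :: P.flatten.map Prod.snd).sublists, l₀ ∈ T → l₁ ∈ T →
    ∃ c ∈ P, ∀ q ∈ c, decide (q.2 ∈ T) = q.1

variable (S) in
/-- A certificate that `w` is nontrivial. Each occurrence `(u, c)` of `O` places a coding of `C`
at `ū`; the cells `u ++ v` of the occurrences, as well as `[]` and `w`, carry natural-number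
labels, and equal labels must name equal group elements. `LabelCover` asks that every set `T` of
labels (the cells carrying `1`; `sublists` enumerates them all) that contains the labels `l₀` of
`[]` and `l₁` of `w` contains one of the occurrences. -/
def IsCertificate (C : Set (PatternCoding k Bool)) (w : List (Fin k))
    (l₀ l₁ : ℕ) (O : List (LabelledOccurrence k)) : Prop :=
  (∀ p ∈ labelledWords w l₀ l₁ O, ∀ q ∈ labelledWords w l₀ l₁ O,
      p.2 = q.2 → wordEval S p.1 = wordEval S q.1) ∧
    (∀ o ∈ O, o.2.map (fun q => (q.1, q.2.1)) ∈ C) ∧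
    LabelCover l₀ l₁ (O.map fun o => o.2.map Prod.snd)

theorem map_snd_labelledWords (w : List (Fin k)) (l₀ l₁ : ℕ)
    (O : List (LabelledOccurrence k)) :
    (labelledWords w l₀ l₁ O).map Prod.snd =
      l₀ :: l₁ :: (O.map fun o => o.2.map Prod.snd).flatten.map Prod.snd := by
  simp [labelledWords, List.flatMap_def, Function.comp_def]

theorem IsCertificate.not_mem_XC {C : Set (PatternCoding k Bool)} {w : List (Fin k)}
    {l₀ l₁ : ℕ} {O : List (LabelledOccurrence k)} (h : IsCertificate S C w l₀ l₁ O)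
    {x : G → Bool} (h₀ : x 1 = true) (h₁ : x (wordEval S w) = true) : x ∉ XC S C := by
  obtain ⟨hlabel, hC, hcover⟩ := h
  set L := labelledWords w l₀ l₁ O
  let T := (L.map Prod.snd).filter fun n => ∃ p ∈ L, p.2 = n ∧ x (wordEval S p.1) = true
  have hT : ∀ p ∈ L, p.2 ∈ T ↔ x (wordEval S p.1) = true := by
    intro p hp
    simp only [T, List.mem_filter, List.mem_map, decide_eq_true_eq]
    constructor
    · rintro ⟨-, q, hq, hqp, hxq⟩
      rwa [← hlabel q hq p hp hqp]
    · intro hx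
      exact ⟨⟨p, hp, rfl⟩, p, hp, rfl, hx⟩
  have hTsub :
      T ∈ (l₀ :: l₁ :: (O.map fun o => o.2.map Prod.snd).flatten.map Prod.snd).sublists :=
    List.mem_sublists.2 (map_snd_labelledWords w l₀ l₁ O ▸ List.filter_sublist)
  obtain ⟨c, hcP, hc⟩ := hcover T hTsub
    ((hT ([], l₀) (by simp [L, labelledWords])).2 (by simpa [wordEval] using h₀))
    ((hT (w, l₁) (by simp [L, labelledWords])).2 h₁)
  obtain ⟨o, ho, rfl⟩ := List.mem_map.1 hcP
  intro hx
  refine hx ⟨wordEval S o.1, _, hC o ho, ?_⟩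
  simp only [List.mem_map]
  rintro _ ⟨q, hq, rfl⟩
  have hqL : (o.1 ++ q.1, q.2.2) ∈ L := by
    simp only [L, labelledWords, List.mem_cons, List.mem_flatMap, List.mem_map]
    exact Or.inr (Or.inr ⟨o, ho, q, hq, rfl⟩)
  show x (wordEval S o.1 * wordEval S q.1) = q.2.1
  rw [← hc q.2 (List.mem_map_of_mem hq), ← wordEval_append, Bool.eq_iff_iff,
    decide_eq_true_iff, hT _ hqL]

theorem exists_isCertificate_of_cover (hsurj : Function.Surjective (wordEval S))
    {C : Set (PatternCoding k Bool)} {w : List (Fin k)} {l : List (G × PatternCoding k Bool)}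
    (hlC : ∀ o ∈ l, o.2 ∈ C)
    (hl : ∀ x : G → Bool, x 1 = true → x (wordEval S w) = true →
      ∃ o ∈ l, ∀ p ∈ o.2, x (o.1 * wordEval S p.1) = p.2) :
    ∃ l₀ l₁ O, IsCertificate S C w l₀ l₁ O := by
  choose word hword using hsurj
  let cells : List G :=
    1 :: wordEval S w :: l.flatMap fun o => o.2.map fun p => o.1 * wordEval S p.1
  let label : G → ℕ := cells.idxOf
  let O : List (LabelledOccurrence k) :=
    l.map fun o => (word o.1, o.2.map fun p => (p.1, p.2, label (o.1 * wordEval S p.1)))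
  refine ⟨label 1, label (wordEval S w), O, ?_, ?_, ?_⟩
  · have hcell : ∀ p ∈ labelledWords w (label 1) (label (wordEval S w)) O,
        wordEval S p.1 ∈ cells ∧ p.2 = label (wordEval S p.1) := by
      simp only [labelledWords, List.mem_cons, List.mem_flatMap, List.mem_map, O]
      rintro p (rfl | rfl | ⟨_, ⟨o, ho, rfl⟩, r, hr, rfl⟩)
      · simp [cells, wordEval]
      · simp [cells]
      · obtain ⟨q, hq, rfl⟩ := List.mem_map.1 hr
        simp only [wordEval_append, hword, and_true]
        simp only [cells, List.mem_cons, List.mem_flatMap, List.mem_map]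
        exact Or.inr (Or.inr ⟨o, ho, q, hq, rfl⟩)
    intro p hp q hq hpq
    obtain ⟨hpc, hpl⟩ := hcell p hp
    obtain ⟨hqc, hql⟩ := hcell q hq
    exact (List.idxOf_inj hpc).1 (hpl.symm.trans (hpq.trans hql))
  · simp only [O, List.mem_map]
    rintro _ ⟨o, ho, rfl⟩
    simpa [Function.comp_def] using hlC o ho
  · intro T _ h₀ h₁
    obtain ⟨o, ho, hocc⟩ :=
      hl (fun g => decide (label g ∈ T)) (by simpa using h₀) (by simpa using h₁)
    refine ⟨_, List.mem_map_of_mem (List.mem_map_of_mem ho), ?_⟩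
    simp only [List.map_map, List.mem_map]
    rintro _ ⟨p, hp, rfl⟩
    exact hocc p hp

open Primrec in
theorem primrecPred_labelCover :
    PrimrecPred fun x : ℕ × ℕ × List (List (Bool × ℕ)) => LabelCover x.1 x.2.1 x.2.2 := by
  have hmem : PrimrecRel fun (n : ℕ) (T : List ℕ) => n ∈ T :=
    ((PrimrecRel.exists_mem_list Primrec.eq).comp snd fst).of_eq fun _ => by simp
  have hagree : PrimrecRel fun (c : List (Bool × ℕ)) (T : List ℕ) =>
      ∀ q ∈ c, decide (q.2 ∈ T) = q.1 :=
    PrimrecRel.forall_mem_list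
      (Primrec.eq.comp (hmem.decide.comp (snd.comp fst) snd) (fst.comp fst))
  have hstep : PrimrecRel fun (T : List ℕ) (x : ℕ × ℕ × List (List (Bool × ℕ))) =>
      x.1 ∈ T → x.2.1 ∈ T → ∃ c ∈ x.2.2, ∀ q ∈ c, decide (q.2 ∈ T) = q.1 :=
    ((hmem.comp (fst.comp snd) fst).not.or ((hmem.comp (fst.comp (snd.comp snd)) fst).not.or
      ((PrimrecRel.exists_mem_list hagree).comp (snd.comp (snd.comp snd)) fst))).of_eq
      fun _ => by tauto
  have hcells : Primrec fun x : ℕ × ℕ × List (List (Bool × ℕ)) =>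
      x.1 :: x.2.1 :: x.2.2.flatten.map Prod.snd :=
    list_cons.comp fst (list_cons.comp (fst.comp snd)
      (list_map (list_flatten.comp (snd.comp snd)) (snd.comp snd).to₂))
  exact (PrimrecRel.forall_mem_list hstep).comp (list_sublists.comp hcells) Primrec.id

open Primrec in
theorem primrec_labelledWords :
    Primrec fun x : List (Fin k) × ℕ × ℕ × List (LabelledOccurrence k) =>
      labelledWords x.1 x.2.1 x.2.2.1 x.2.2.2 :=
  list_cons.comp ((const []).pair (fst.comp snd))
    (list_cons.comp (fst.pair (fst.comp (snd.comp snd)))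
      (list_flatMap (snd.comp (snd.comp snd))
        (list_map (snd.comp snd) ((list_append.comp (fst.comp (snd.comp fst))
          (fst.comp snd)).pair (snd.comp (snd.comp snd))).to₂)))

open Primrec in
theorem rePred_exists_isCertificate {τ : Fin k → Fin k} (hτ : ∀ i, S (τ i) = (S i)⁻¹)
    (hWP : REPred (· ∈ WP S)) {C : Set (PatternCoding k Bool)} (hC : REPred (· ∈ C)) :
    REPred fun w : List (Fin k) =>
      ∃ t : ℕ × ℕ × List (LabelledOccurrence k), IsCertificate S C w t.1 t.2.1 t.2.2 := by
  refine REPred.exists_of_prod (REPred.and ?_ (REPred.and ?_ ?_))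
  · exact REPred.forall_mem_list (REPred.forall_mem_list (REPred.imp
      (Primrec.eq.comp (snd.comp (snd.comp fst)) (snd.comp snd))
      (REPred.comp (rePred_wordEval_eq hτ hWP)
        ((fst.comp (snd.comp fst)).pair (fst.comp snd)).to_comp))
      (primrec_labelledWords.comp fst)) primrec_labelledWords
  · exact REPred.forall_mem_list (REPred.comp hC
      (list_map (snd.comp snd) ((fst.comp snd).pair (fst.comp (snd.comp snd))).to₂).to_comp)
      (snd.comp (snd.comp snd))
  · exact (primrecPred_labelCover.comp ((fst.comp snd).pair ((fst.comp (snd.comp snd)).pair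
      (list_map (snd.comp (snd.comp snd))
        (list_map (snd.comp snd) (snd.comp snd).to₂).to₂)))).computablePred.to_re

theorem not_mem_wp_iff_exists_isCertificate (hsurj : Function.Surjective (wordEval S))
    {C : Set (PatternCoding k Bool)} (hX : Xle1 G = XC S C) (w : List (Fin k)) :
    w ∉ WP S ↔
      ∃ t : ℕ × ℕ × List (LabelledOccurrence k), IsCertificate S C w t.1 t.2.1 t.2.2 := by
  constructor
  · intro hw
    let K : Set (G → Bool) := {x | x 1 = true ∧ x (wordEval S w) = true}
    have hK : IsClosed K :=
      (isClosed_eq (continuous_apply 1) continuous_const).inter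
        (isClosed_eq (continuous_apply _) continuous_const)
    have hKX : Disjoint K (XC S C) :=
      hX ▸ Set.disjoint_left.2 fun x hxK hx => hw (hx _ _ hxK.2 hxK.1)
    obtain ⟨l, hlC, hl⟩ := exists_list_cover_of_isClosed hK hKX
    obtain ⟨l₀, l₁, O, hO⟩ :=
      exists_isCertificate_of_cover hsurj hlC fun x h₀ h₁ => hl x ⟨h₀, h₁⟩
    exact ⟨(l₀, l₁, O), hO⟩
  · rintro ⟨t, ht⟩ hw
    have hδ : (fun g : G => decide (g = 1)) ∈ XC S C :=
      hX ▸ fun g h hg hh => (of_decide_eq_true hg).trans (of_decide_eq_true hh).symm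
    exact ht.not_mem_XC (by simp) (by simp [show wordEval S w = 1 from hw]) hδ

theorem rePred_not_mem_wp {τ : Fin k → Fin k} (hτ : ∀ i, S (τ i) = (S i)⁻¹)
    (hsurj : Function.Surjective (wordEval S)) (hWP : REPred (· ∈ WP S))
    (hX : EffectivelyClosed S (Xle1 G)) : REPred fun w => w ∉ WP S := by
  obtain ⟨C, hC, hX⟩ := hX
  exact (rePred_exists_isCertificate hτ hWP hC).of_eq fun w =>
    (not_mem_wp_iff_exists_isCertificate hsurj hX w).symm

/-- For a recursively presented group `G`, the one-or-less subshift
`X_{≤1}` is effectively closed if and only if the word problem of `G` is decidable. -/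
theorem xle1_effectivelyClosed_iff_wp_decidable
    {G : Type} [Group G] {k : ℕ} (S : Fin k → G) (hS : IsGenData S)
    (hWP : REPred (· ∈ WP S)) :
    EffectivelyClosed S (Xle1 G) ↔ ComputablePred (· ∈ WP S) := by
  choose τ hτ using hS.2.1
  have hsurj := wordEval_surjective hτ hS.2.2
  exact ⟨fun h => ComputablePred.computable_iff_re_compl_re'.2
      ⟨hWP, rePred_not_mem_wp hτ hsurj hWP h⟩,
    effectivelyClosed_xle1 hsurj⟩

end SDG
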